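/- arXiv:math/0409481 — 6 statements merged into one kernel-verified Lean document; each statement's English description precedes it below -/
import Mathlib

section
/- There exists a constant C_L > 0 such that for every u ∈ X one has ‖u‖_Y ≤ ε_L·‖u‖_X + C_L·max_{1≤j≤k} |l_j(u)|. -/
open Filter

/-- Linearly independent continuous functionals admit a dual family. -/
lemma statement0_aux {X : Type*} [NormedAddCommGroup X] [NormedSpace ℝ X]
    {k : ℕ} (l : Fin k → (X →L[ℝ] ℝ)) (hl : LinearIndependent ℝ l) :
    ∃ v : Fin k → X, ∀ i j, l i (v j) = if i = j then 1 else 0 := by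
  set φ : X →ₗ[ℝ] (Fin k → ℝ) := LinearMap.pi (fun j => (l j : X →ₗ[ℝ] ℝ)) with hφ
  have hsurj : Function.Surjective φ := by
    by_contra h
    have hlt : LinearMap.range φ < ⊤ := lt_top_iff_ne_top.mpr (by
      intro htop
      exact h (LinearMap.range_eq_top.mp htop))
    obtain ⟨f, hf0, hf⟩ := Submodule.exists_dual_map_eq_bot_of_lt_top hlt inferInstance
    -- f vanishes on the range of φ
    have hker : ∀ x : X, f (φ x) = 0 := by
      intro x
      have : f (φ x) ∈ Submodule.map f (LinearMap.range φ) :=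
        Submodule.mem_map_of_mem (LinearMap.mem_range_self φ x)
      rw [hf] at this
      simpa using this
    -- the coefficients of f kill l by linear independence
    have hc : ∀ i, f (Pi.single i 1) = 0 := by
      have hsum : (∑ i, f (Pi.single i 1) • l i) = 0 := by
        ext x
        have heq : (fun i => l i x) = ∑ i, (l i x) • (Pi.single i 1 : Fin k → ℝ) := by
          simp [← Pi.single_smul, smul_eq_mul, mul_one, Finset.univ_sum_single]
        have hx : f (fun i => l i x) = 0 := by
          have h' : (φ x) = fun i => l i x := by funext i; simp [hφ]
          rw [← h']; exact hker x
        rw [heq] at hx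
        simp only [map_sum, map_smul, smul_eq_mul] at hx
        simp only [ContinuousLinearMap.coe_sum', Finset.sum_apply,
          ContinuousLinearMap.coe_smul', Pi.smul_apply, smul_eq_mul,
          ContinuousLinearMap.zero_apply]
        rw [← hx]
        exact Finset.sum_congr rfl (fun i _ => mul_comm _ _)
      exact Fintype.linearIndependent_iff.mp hl _ hsum
    -- hence f = 0, contradiction
    apply hf0
    apply LinearMap.ext
    intro y
    have : y = ∑ i, y i • (Pi.single i 1 : Fin k → ℝ) := by
      simp [← Pi.single_smul, smul_eq_mul, mul_one, Finset.univ_sum_single]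
    rw [this]
    simp [hc]
  choose v hv using fun j => hsurj (Pi.single j 1)
  refine ⟨v, fun i j => ?_⟩
  have := congrFun (hv j) i
  simp only [hφ, LinearMap.pi_apply, ContinuousLinearMap.coe_coe] at this
  rw [this, Pi.single_apply]

/-- Let `X` and `Y` be real normed spaces, `e : X → Y` an injective
continuous linear embedding, and `l 1, …, l k` (with `k ≥ 1`) linearly independent
continuous linear functionals on `X`.  If `εL` is the completeness defect of the family
`l` with respect to the pair `(X, Y)`, i.e.
`εL = sSup {‖e w‖ : w ∈ X, l j w = 0 for all j, ‖w‖ ≤ 1}`, then there is a constant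
`C_L > 0` such that `‖u‖_Y ≤ εL * ‖u‖_X + C_L * max_j |l j u|` for every `u ∈ X`. -/
theorem statement0
    {X Y : Type*} [NormedAddCommGroup X] [NormedSpace ℝ X]
    [NormedAddCommGroup Y] [NormedSpace ℝ Y]
    (e : X →L[ℝ] Y) (he : Function.Injective e)
    {k : ℕ} (hk : 0 < k) (l : Fin k → (X →L[ℝ] ℝ))
    (hl : LinearIndependent ℝ l)
    (εL : ℝ)
    (hεL : εL = sSup {r : ℝ | ∃ w : X, (∀ j, l j w = 0) ∧ ‖w‖ ≤ 1 ∧ r = ‖e w‖}) :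
    ∃ C : ℝ, 0 < C ∧ ∀ u : X, ‖e u‖ ≤ εL * ‖u‖ + C * ⨆ j, |l j u| := by
  haveI : Nonempty (Fin k) := ⟨⟨0, hk⟩⟩
  obtain ⟨v, hv⟩ := statement0_aux l hl
  set S : Set ℝ := {r : ℝ | ∃ w : X, (∀ j, l j w = 0) ∧ ‖w‖ ≤ 1 ∧ r = ‖e w‖} with hS
  have hS0 : (0:ℝ) ∈ S := ⟨0, fun j => by simp, by simp, by simp⟩
  have hSbdd : BddAbove S := by
    refine ⟨‖e‖, fun r hr => ?_⟩
    obtain ⟨w, _, hw1, rfl⟩ := hr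
    calc ‖e w‖ ≤ ‖e‖ * ‖w‖ := e.le_opNorm w
    _ ≤ ‖e‖ * 1 := mul_le_mul_of_nonneg_left hw1 (norm_nonneg _)
    _ = ‖e‖ := mul_one _
  have hε0 : 0 ≤ εL := hεL ▸ le_csSup hSbdd hS0
  -- the key homogeneous estimate
  have key : ∀ w : X, (∀ j, l j w = 0) → ‖e w‖ ≤ εL * ‖w‖ := by
    intro w hw
    rcases eq_or_ne w 0 with rfl | hw0
    · simp
    · have hnw : 0 < ‖w‖ := norm_pos_iff.mpr hw0
      have hmem : ‖e (‖w‖⁻¹ • w)‖ ∈ S := by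
        refine ⟨‖w‖⁻¹ • w, fun j => by simp [hw j], ?_, rfl⟩
        rw [norm_smul, norm_inv, norm_norm]
        rw [inv_mul_cancel₀ hnw.ne']
      have hle : ‖e (‖w‖⁻¹ • w)‖ ≤ εL := hεL ▸ le_csSup hSbdd hmem
      have : ‖e (‖w‖⁻¹ • w)‖ = ‖w‖⁻¹ * ‖e w‖ := by
        rw [map_smul, norm_smul, norm_inv, norm_norm]
      rw [this] at hle
      calc ‖e w‖ = ‖w‖ * (‖w‖⁻¹ * ‖e w‖) := by field_simp
      _ ≤ ‖w‖ * εL := by gcongr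
      _ = εL * ‖w‖ := mul_comm _ _
  refine ⟨(∑ j, (εL * ‖v j‖ + ‖e (v j)‖)) + 1, ?_, ?_⟩
  · have : 0 ≤ ∑ j, (εL * ‖v j‖ + ‖e (v j)‖) :=
      Finset.sum_nonneg fun j _ => add_nonneg (mul_nonneg hε0 (norm_nonneg _)) (norm_nonneg _)
    linarith
  · intro u
    set M : ℝ := ⨆ j, |l j u| with hM
    have hbM : BddAbove (Set.range fun j => |l j u|) := Set.Finite.bddAbove (Set.finite_range _)
    have hMle : ∀ j, |l j u| ≤ M := fun j => le_ciSup hbM j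
    have hM0 : 0 ≤ M := le_trans (abs_nonneg _) (hMle (Classical.arbitrary _))
    set w : X := u - ∑ j, (l j u) • v j with hw
    have hwl : ∀ i, l i w = 0 := by
      intro i
      simp only [hw, map_sub, map_sum, map_smul, smul_eq_mul, hv]
      rw [Finset.sum_eq_single i]
      · simp
      · intro b _ hb; simp [if_neg (Ne.symm hb)]
      · intro h; exact absurd (Finset.mem_univ i) h
    have h1 : ‖w‖ ≤ ‖u‖ + ∑ j, |l j u| * ‖v j‖ := by
      calc ‖w‖ ≤ ‖u‖ + ‖∑ j, (l j u) • v j‖ := norm_sub_le _ _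
      _ ≤ ‖u‖ + ∑ j, ‖(l j u) • v j‖ := by gcongr; exact norm_sum_le _ _
      _ = ‖u‖ + ∑ j, |l j u| * ‖v j‖ := by simp [norm_smul, Real.norm_eq_abs]
    have h2 : ‖e u‖ ≤ ‖e w‖ + ∑ j, |l j u| * ‖e (v j)‖ := by
      have : e u = e w + ∑ j, (l j u) • e (v j) := by
        simp only [hw, map_sub, map_sum, map_smul]
        abel
      rw [this]
      calc ‖e w + ∑ j, (l j u) • e (v j)‖ ≤ ‖e w‖ + ‖∑ j, (l j u) • e (v j)‖ := norm_add_le _ _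
      _ ≤ ‖e w‖ + ∑ j, ‖(l j u) • e (v j)‖ := by gcongr; exact norm_sum_le _ _
      _ = ‖e w‖ + ∑ j, |l j u| * ‖e (v j)‖ := by simp [norm_smul, Real.norm_eq_abs]
    have h3 : ‖e w‖ ≤ εL * ‖w‖ := key w hwl
    have h4 : ∑ j, |l j u| * (εL * ‖v j‖ + ‖e (v j)‖) ≤
        (∑ j, (εL * ‖v j‖ + ‖e (v j)‖)) * M := by
      rw [Finset.sum_mul]
      refine Finset.sum_le_sum fun j _ => ?_
      rw [mul_comm]
      exact mul_le_mul_of_nonneg_left (hMle j)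
        (add_nonneg (mul_nonneg hε0 (norm_nonneg _)) (norm_nonneg _))
    have h5 : ‖e u‖ ≤ εL * ‖u‖ + ∑ j, |l j u| * (εL * ‖v j‖ + ‖e (v j)‖) := by
      have := h2.trans (by linarith [mul_le_mul_of_nonneg_left h1 hε0] :
        ‖e w‖ + ∑ j, |l j u| * ‖e (v j)‖ ≤
          εL * (‖u‖ + ∑ j, |l j u| * ‖v j‖) + ∑ j, |l j u| * ‖e (v j)‖)
      calc ‖e u‖ ≤ εL * (‖u‖ + ∑ j, |l j u| * ‖v j‖) + ∑ j, |l j u| * ‖e (v j)‖ := this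
      _ = εL * ‖u‖ + ∑ j, |l j u| * (εL * ‖v j‖ + ‖e (v j)‖) := by
          rw [mul_add, Finset.mul_sum, add_assoc, ← Finset.sum_add_distrib]
          congr 1
          exact Finset.sum_congr rfl fun j _ => by ring
    calc ‖e u‖ ≤ εL * ‖u‖ + ∑ j, |l j u| * (εL * ‖v j‖ + ‖e (v j)‖) := h5
    _ ≤ εL * ‖u‖ + (∑ j, (εL * ‖v j‖ + ‖e (v j)‖)) * M := by linarith
    _ ≤ εL * ‖u‖ + ((∑ j, (εL * ‖v j‖ + ‖e (v j)‖)) + 1) * M := by nlinarith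
end

section
/- For every δ > 0 there exists a constant C_{δ,L} > 0 such that for every u ∈ X one has ‖u‖_Y² ≤ (1+δ)·ε_L²·‖u‖_X² + C_{δ,L}·max_{1≤j≤k} |l_j(u)|²; equivalently, ‖u‖_X² ≥ (1+δ)^{-1}·ε_L^{-2}·‖u‖_Y² − C'_{δ,L}·max_{1≤j≤k} |l_j(u)|² for a suitable constant C'_{δ,L} > 0. -/
/-!
Split `u = (u - v) + v`, where `v` has the same values `l j v = l j u` and norm at most a constant
times `max_j |l j u|`; such a `v` exists because `u ↦ (l j u)_j` has finite-dimensional range, and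
a linear right inverse defined on that range is automatically continuous. The component `u - v` is
annihilated by every `l j`, so `‖u - v‖_Y ≤ ε_L ‖u - v‖_X`, which gives
`‖u‖_Y ≤ ε_L ‖u‖_X + K max_j |l j u|`. Squaring with the weighted inequality
`(a + b)² ≤ (1 + δ) a² + (1 + δ⁻¹) b²` gives the first estimate, and dividing by `(1 + δ) ε_L²`
the second (for `ε_L = 0` the inverse is the junk value `0` and the second estimate is trivial).
-/

theorem ContinuousLinearMap.exists_preimage_norm_le_of_finiteDimensional
    {𝕜 X F : Type*} [NontriviallyNormedField 𝕜] [CompleteSpace 𝕜]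
    [NormedAddCommGroup X] [NormedSpace 𝕜 X] [NormedAddCommGroup F] [NormedSpace 𝕜 F]
    [FiniteDimensional 𝕜 F] (Φ : X →L[𝕜] F) :
    ∃ C, 0 ≤ C ∧ ∀ u, ∃ v, Φ v = Φ u ∧ ‖v‖ ≤ C * ‖Φ u‖ := by
  obtain ⟨s, hs⟩ := (Φ : X →ₗ[𝕜] F).rangeRestrict.exists_rightInverse_of_surjective
    (LinearMap.range_rangeRestrict _)
  let s' : LinearMap.range (Φ : X →ₗ[𝕜] F) →L[𝕜] X := LinearMap.toContinuousLinearMap s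
  refine ⟨‖s'‖, norm_nonneg _, fun u => ⟨s' ⟨Φ u, u, rfl⟩, ?_, s'.le_opNorm _⟩⟩
  exact congr_arg Subtype.val (LinearMap.congr_fun hs ⟨Φ u, u, rfl⟩)

theorem ContinuousLinearMap.exists_norm_le_mul_add_of_le_on_ker
    {X Y F : Type*} [NormedAddCommGroup X] [NormedSpace ℝ X] [NormedAddCommGroup Y]
    [NormedSpace ℝ Y] [NormedAddCommGroup F] [NormedSpace ℝ F] [FiniteDimensional ℝ F]
    (e : X →L[ℝ] Y) (Φ : X →L[ℝ] F) {a : ℝ} (ha : 0 ≤ a)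
    (h : ∀ w, Φ w = 0 → ‖e w‖ ≤ a * ‖w‖) :
    ∃ K, 0 ≤ K ∧ ∀ u, ‖e u‖ ≤ a * ‖u‖ + K * ‖Φ u‖ := by
  obtain ⟨C, hC, hv⟩ := Φ.exists_preimage_norm_le_of_finiteDimensional
  refine ⟨(a + ‖e‖) * C, by positivity, fun u => ?_⟩
  obtain ⟨v, hΦv, hv⟩ := hv u
  have hker : Φ (u - v) = 0 := by rw [map_sub, hΦv, sub_self]
  calc ‖e u‖ = ‖e (u - v) + e v‖ := by rw [← map_add, sub_add_cancel]
    _ ≤ a * ‖u - v‖ + ‖e‖ * ‖v‖ := (norm_add_le _ _).trans (add_le_add (h _ hker) (e.le_opNorm v))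
    _ ≤ a * (‖u‖ + ‖v‖) + ‖e‖ * ‖v‖ := by gcongr; exact norm_sub_le _ _
    _ = a * ‖u‖ + (a + ‖e‖) * ‖v‖ := by ring
    _ ≤ a * ‖u‖ + (a + ‖e‖) * (C * ‖Φ u‖) := by gcongr
    _ = a * ‖u‖ + (a + ‖e‖) * C * ‖Φ u‖ := by ring

theorem add_sq_le_one_add_mul_sq_add_one_add_inv_mul_sq {δ : ℝ} (hδ : 0 < δ) (a b : ℝ) :
    (a + b) ^ 2 ≤ (1 + δ) * a ^ 2 + (1 + δ⁻¹) * b ^ 2 := by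
  have hsq : 0 ≤ δ⁻¹ * (δ * a - b) ^ 2 := by positivity
  have hexpand : δ⁻¹ * (δ * a - b) ^ 2 = δ * a ^ 2 - 2 * a * b + δ⁻¹ * b ^ 2 := by
    field_simp
    ring
  linarith

theorem inv_mul_sub_inv_mul_le_of_le_mul_add {c x y D : ℝ} (hc : 0 ≤ c) (hx : 0 ≤ x)
    (h : y ≤ c * x + D) : c⁻¹ * y - c⁻¹ * D ≤ x := by
  rcases hc.eq_or_lt with rfl | hc
  · simpa using hx
  · rw [← mul_sub, inv_mul_le_iff₀ hc]
    linarith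

section CompletenessDefect

variable {X Y ι : Type*} [NormedAddCommGroup X] [NormedSpace ℝ X] [NormedAddCommGroup Y]
  [NormedSpace ℝ Y] (e : X →L[ℝ] Y) (l : ι → X →L[ℝ] ℝ)

noncomputable def completenessDefect : ℝ :=
  sSup {r : ℝ | ∃ w : X, (∀ j, l j w = 0) ∧ ‖w‖ ≤ 1 ∧ r = ‖e w‖}

theorem bddAbove_completenessDefect_set :
    BddAbove {r : ℝ | ∃ w : X, (∀ j, l j w = 0) ∧ ‖w‖ ≤ 1 ∧ r = ‖e w‖} := by
  refine ⟨‖e‖, ?_⟩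
  rintro _ ⟨w, -, hw, rfl⟩
  simpa using e.le_opNorm_of_le hw

theorem completenessDefect_nonneg : 0 ≤ completenessDefect e l :=
  le_csSup (bddAbove_completenessDefect_set e l) ⟨0, fun j => map_zero _, by simp, by simp⟩

theorem norm_le_completenessDefect_mul {w : X} (hw : ∀ j, l j w = 0) :
    ‖e w‖ ≤ completenessDefect e l * ‖w‖ := by
  rcases eq_or_ne w 0 with rfl | hw0
  · simp
  have hpos : 0 < ‖w‖ := norm_pos_iff.mpr hw0
  have hmem : ‖e (‖w‖⁻¹ • w)‖ ∈
      {r : ℝ | ∃ w : X, (∀ j, l j w = 0) ∧ ‖w‖ ≤ 1 ∧ r = ‖e w‖} :=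
    ⟨‖w‖⁻¹ • w, fun j => by simp [hw j], by simp [norm_smul, hpos.ne'], rfl⟩
  have hle := le_csSup (bddAbove_completenessDefect_set e l) hmem
  rw [map_smul, norm_smul, norm_inv, norm_norm, inv_mul_le_iff₀ hpos, mul_comm] at hle
  exact hle

theorem norm_pi_le_iSup_abs [Fintype ι] (u : X) :
    ‖ContinuousLinearMap.pi l u‖ ≤ ⨆ j, |l j u| :=
  (pi_norm_le_iff_of_nonneg (Real.iSup_nonneg fun _ => abs_nonneg _)).2 fun j =>
    le_ciSup (f := fun j => |l j u|) (Set.finite_range _).bddAbove j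

theorem exists_norm_le_completenessDefect_mul_add [Finite ι] :
    ∃ K, 0 ≤ K ∧ ∀ u, ‖e u‖ ≤ completenessDefect e l * ‖u‖ + K * ⨆ j, |l j u| := by
  have := Fintype.ofFinite ι
  obtain ⟨K, hK, hu⟩ := e.exists_norm_le_mul_add_of_le_on_ker (ContinuousLinearMap.pi l)
    (completenessDefect_nonneg e l) fun w hw =>
      norm_le_completenessDefect_mul e l fun j => congr_fun hw j
  exact ⟨K, hK, fun u => (hu u).trans (by gcongr; exact norm_pi_le_iSup_abs l u)⟩

end CompletenessDefect

theorem statement1_general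
    {X Y : Type*} [NormedAddCommGroup X] [NormedSpace ℝ X]
    [NormedAddCommGroup Y] [NormedSpace ℝ Y]
    (e : X →L[ℝ] Y)
    {k : ℕ} (l : Fin k → (X →L[ℝ] ℝ))
    (εL : ℝ)
    (hεL : εL = sSup {r : ℝ | ∃ w : X, (∀ j, l j w = 0) ∧ ‖w‖ ≤ 1 ∧ r = ‖e w‖}) :
    ∀ δ : ℝ, 0 < δ →
      (∃ C : ℝ, 0 < C ∧ ∀ u : X,
          ‖e u‖ ^ 2 ≤ (1 + δ) * εL ^ 2 * ‖u‖ ^ 2 + C * (⨆ j, |l j u|) ^ 2) ∧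
      (∃ C' : ℝ, 0 < C' ∧ ∀ u : X,
          ‖u‖ ^ 2 ≥ (1 + δ)⁻¹ * (εL ^ 2)⁻¹ * ‖e u‖ ^ 2 - C' * (⨆ j, |l j u|) ^ 2) := by
  intro δ hδ
  change εL = completenessDefect e l at hεL
  subst hεL
  obtain ⟨K, hK, hlin⟩ := exists_norm_le_completenessDefect_mul_add e l
  set C := (1 + δ⁻¹) * K ^ 2 + 1
  have hsq : ∀ u, ‖e u‖ ^ 2 ≤
      (1 + δ) * completenessDefect e l ^ 2 * ‖u‖ ^ 2 + C * (⨆ j, |l j u|) ^ 2 := fun u =>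
    calc ‖e u‖ ^ 2 ≤ (completenessDefect e l * ‖u‖ + K * ⨆ j, |l j u|) ^ 2 := by
          gcongr; exact hlin u
      _ ≤ (1 + δ) * (completenessDefect e l * ‖u‖) ^ 2 + (1 + δ⁻¹) * (K * ⨆ j, |l j u|) ^ 2 :=
          add_sq_le_one_add_mul_sq_add_one_add_inv_mul_sq hδ _ _
      _ ≤ _ := by nlinarith [sq_nonneg (⨆ j, |l j u|)]
  set c := (1 + δ) * completenessDefect e l ^ 2
  have hc : 0 ≤ c := by positivity
  refine ⟨⟨C, by positivity, hsq⟩, ⟨c⁻¹ * C + 1, by positivity, fun u => ?_⟩⟩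
  have hdiv := inv_mul_sub_inv_mul_le_of_le_mul_add hc (sq_nonneg ‖u‖) (hsq u)
  rw [← mul_inv]
  nlinarith [sq_nonneg (⨆ j, |l j u|)]

/-- In the setting of the completeness defect `εL` of a family of
linearly independent continuous functionals `l 1, …, l k` on `X` with respect to the
pair `(X, Y)`: for every `δ > 0` there is a constant `C_{δ,L} > 0` such that
`‖u‖_Y² ≤ (1+δ) εL² ‖u‖_X² + C_{δ,L} max_j |l j u|²` for all `u`; equivalently,
`‖u‖_X² ≥ (1+δ)⁻¹ εL⁻² ‖u‖_Y² − C'_{δ,L} max_j |l j u|²` for a suitable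
constant `C'_{δ,L} > 0`. -/
theorem statement1
    {X Y : Type*} [NormedAddCommGroup X] [NormedSpace ℝ X]
    [NormedAddCommGroup Y] [NormedSpace ℝ Y]
    (e : X →L[ℝ] Y) (he : Function.Injective e)
    {k : ℕ} (hk : 0 < k) (l : Fin k → (X →L[ℝ] ℝ))
    (hl : LinearIndependent ℝ l)
    (εL : ℝ)
    (hεL : εL = sSup {r : ℝ | ∃ w : X, (∀ j, l j w = 0) ∧ ‖w‖ ≤ 1 ∧ r = ‖e w‖}) :
    ∀ δ : ℝ, 0 < δ →
      (∃ C : ℝ, 0 < C ∧ ∀ u : X,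
          ‖e u‖ ^ 2 ≤ (1 + δ) * εL ^ 2 * ‖u‖ ^ 2 + C * (⨆ j, |l j u|) ^ 2) ∧
      (∃ C' : ℝ, 0 < C' ∧ ∀ u : X,
          ‖u‖ ^ 2 ≥ (1 + δ)⁻¹ * (εL ^ 2)⁻¹ * ‖e u‖ ^ 2 - C' * (⨆ j, |l j u|) ^ 2) :=
  statement1_general e l εL hεL
end

section
/- Assume in addition that X is a Hilbert space. Then ε_L = inf{ sup{ ‖u − Σ_{j=1}^k l_j(u)·φ_j‖_Y : u ∈ X, ‖u‖_X ≤ 1 } : φ_1, …, φ_k ∈ X }; that is, the completeness defect ε_L is the best possible global error of approximation in Y of elements of the unit ball of X by elements of the form Σ_{j=1}^k l_j(u)·φ_j. -/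
/-!
For every `φ`, the error of approximation is at least `ε_L`: on the common kernel `K` of the `l j`
the approximant `∑ j, l j u • φ j` vanishes. Conversely, if the `φ j` lie in `Kᗮ` and are
biorthogonal to the `l j`, then `u - ∑ j, l j u • φ j` is the orthogonal projection of `u` onto `K`,
which does not increase norms; for this `φ` the error set is exactly the defect set.
-/

theorem csSup_eq_csInf_csSup_of_isLeast_range {α ι : Type*} [ConditionallyCompleteLattice α]
    {S : ι → Set α} {A : Set α} (hA : A.Nonempty) (hS : ∀ i, BddAbove (S i))
    (h : IsLeast (Set.range S) A) :
    sSup A = sInf {r | ∃ i, r = sSup (S i)} := by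
  obtain ⟨⟨i₀, hi₀⟩, hle⟩ := h
  have hmem : sSup A ∈ {r | ∃ i, r = sSup (S i)} := ⟨i₀, by rw [hi₀]⟩
  refine (IsLeast.csInf_eq ⟨hmem, ?_⟩).symm
  rintro _ ⟨i, rfl⟩
  exact csSup_le_csSup (hS i) hA (hle ⟨i, rfl⟩)

theorem ContinuousLinearMap.bddAbove_norm_apply_of_norm_le_one {𝕜 E F : Type*}
    [NontriviallyNormedField 𝕜] [SeminormedAddCommGroup E] [SeminormedAddCommGroup F]
    [NormedSpace 𝕜 E] [NormedSpace 𝕜 F] (f : E →L[𝕜] F) :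
    BddAbove {s : ℝ | ∃ u : E, ‖u‖ ≤ 1 ∧ s = ‖f u‖} := by
  refine ⟨‖f‖, ?_⟩
  rintro _ ⟨u, hu, rfl⟩
  exact f.le_of_opNorm_le_of_le le_rfl hu |>.trans_eq (mul_one _)

theorem ContinuousLinearMap.mem_ker_pi_iff {R M ι : Type*} {φ : ι → Type*} [Semiring R]
    [TopologicalSpace M] [AddCommMonoid M] [Module R M] [∀ i, TopologicalSpace (φ i)]
    [∀ i, AddCommMonoid (φ i)] [∀ i, Module R (φ i)] (l : ∀ i, M →L[R] φ i) {w : M} :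
    w ∈ (ContinuousLinearMap.pi l).ker ↔ ∀ i, l i w = 0 := by
  simp [funext_iff]

theorem LinearMap.pi_surjective_of_linearIndependent {ι K V : Type*} [Finite ι] [Field K]
    [AddCommGroup V] [Module K V] {l : ι → Module.Dual K V} (hl : LinearIndependent K l) :
    Function.Surjective (LinearMap.pi l) := by
  have hspan := span_flip_eq_top_iff_linearIndependent.mpr
    (hl.map' (LinearMap.ltoFun K V K K) (LinearMap.ker_eq_bot.mpr DFunLike.coe_injective))
  rw [← LinearMap.range_eq_top, ← hspan, ← Submodule.span_eq (LinearMap.range _),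
    LinearMap.coe_range]
  rfl

theorem exists_sub_sum_smul_eq_starProjection {𝕜 X ι : Type*} [RCLike 𝕜]
    [NormedAddCommGroup X] [InnerProductSpace 𝕜 X] [CompleteSpace X] [Fintype ι] [DecidableEq ι]
    {l : ι → X →L[𝕜] 𝕜} (hl : LinearIndependent 𝕜 l) :
    ∃ φ : ι → X, ∀ u, u - ∑ j, l j u • φ j =
      (ContinuousLinearMap.pi l).ker.starProjection u := by
  set K := (ContinuousLinearMap.pi l).ker
  obtain ⟨ψ, hψ⟩ : ∃ ψ : ι → X, ∀ i j, l i (ψ j) = (Pi.single j 1 : ι → 𝕜) i := by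
    have hsurj := LinearMap.pi_surjective_of_linearIndependent
      (hl.map' (ContinuousLinearMap.coeLM 𝕜)
        (LinearMap.ker_eq_bot.mpr ContinuousLinearMap.coe_injective))
    choose ψ hψ using fun j => hsurj (Pi.single j 1)
    exact ⟨ψ, fun i j => by simpa using congrFun (hψ j) i⟩
  -- projecting `ψ j` onto `Kᗮ` keeps the values of the `l i`, since these vanish on `K`
  refine ⟨fun j => ψ j - K.starProjection (ψ j), fun u => ?_⟩
  have hφ : ∀ i j, l i (ψ j - K.starProjection (ψ j)) = (Pi.single j 1 : ι → 𝕜) i := by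
    intro i j
    rw [map_sub, (ContinuousLinearMap.mem_ker_pi_iff l).1 (K.starProjection_apply_mem _) i,
      sub_zero, hψ]
  refine (K.eq_starProjection_of_mem_orthogonal'
    ((ContinuousLinearMap.mem_ker_pi_iff l).2 fun i => ?_)
    (Kᗮ.sum_mem fun j _ => Kᗮ.smul_mem _ (K.sub_starProjection_mem_orthogonal _))
    (sub_add_cancel u _).symm).symm
  simp [hφ, Pi.single_apply]

theorem statement2_general
    {X Y : Type*} [NormedAddCommGroup X] [InnerProductSpace ℝ X] [CompleteSpace X]
    [NormedAddCommGroup Y] [NormedSpace ℝ Y]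
    (e : X →L[ℝ] Y)
    {k : ℕ} (l : Fin k → (X →L[ℝ] ℝ))
    (hl : LinearIndependent ℝ l)
    (εL : ℝ)
    (hεL : εL = sSup {r : ℝ | ∃ w : X, (∀ j, l j w = 0) ∧ ‖w‖ ≤ 1 ∧ r = ‖e w‖}) :
    εL = sInf {r : ℝ | ∃ φ : Fin k → X,
          r = sSup {s : ℝ | ∃ u : X, ‖u‖ ≤ 1 ∧
                s = ‖e (u - ∑ j, l j u • φ j)‖}} := by
  set K := (ContinuousLinearMap.pi l).ker
  set A := {r : ℝ | ∃ w : X, (∀ j, l j w = 0) ∧ ‖w‖ ≤ 1 ∧ r = ‖e w‖}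
  set S : (Fin k → X) → Set ℝ := fun φ =>
    {s : ℝ | ∃ u : X, ‖u‖ ≤ 1 ∧ s = ‖e (u - ∑ j, l j u • φ j)‖}
  have hS : ∀ φ, BddAbove (S φ) := fun φ => by
    set f := e ∘L (.id ℝ X - ∑ j, (l j).smulRight (φ j))
    have hf : ∀ u, f u = e (u - ∑ j, l j u • φ j) := fun u => by simp [f]
    simpa only [hf] using f.bddAbove_norm_apply_of_norm_le_one
  have hA_subset : ∀ φ, A ⊆ S φ := by
    rintro φ _ ⟨w, hw, hw1, rfl⟩
    exact ⟨w, hw1, by simp [hw]⟩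
  obtain ⟨φ₀, hφ₀⟩ := exists_sub_sum_smul_eq_starProjection hl
  have hS_subset : S φ₀ ⊆ A := by
    rintro _ ⟨u, hu, rfl⟩
    exact ⟨K.starProjection u, (ContinuousLinearMap.mem_ker_pi_iff l).1
      (K.starProjection_apply_mem u), (K.norm_starProjection_apply_le u).trans hu, by rw [hφ₀]⟩
  rw [hεL]
  exact csSup_eq_csInf_csSup_of_isLeast_range (S := S) ⟨_, 0, by simp, by simp, rfl⟩ hS
    ⟨⟨φ₀, subset_antisymm hS_subset (hA_subset φ₀)⟩, Set.forall_mem_range.2 hA_subset⟩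

/-- Assume in addition that `X` is a (real) Hilbert space.  Then the
completeness defect `εL` equals the best possible global error of approximation in `Y`
of elements of the unit ball of `X` by elements of the form `∑ j, l j u • φ j`:
`εL = inf_{φ 1, …, φ k ∈ X} sup { ‖u − ∑ j, l j u • φ j‖_Y : u ∈ X, ‖u‖_X ≤ 1 }`. -/
theorem statement2
    {X Y : Type*} [NormedAddCommGroup X] [InnerProductSpace ℝ X] [CompleteSpace X]
    [NormedAddCommGroup Y] [NormedSpace ℝ Y]
    (e : X →L[ℝ] Y) (he : Function.Injective e)
    {k : ℕ} (hk : 0 < k) (l : Fin k → (X →L[ℝ] ℝ))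
    (hl : LinearIndependent ℝ l)
    (εL : ℝ)
    (hεL : εL = sSup {r : ℝ | ∃ w : X, (∀ j, l j w = 0) ∧ ‖w‖ ≤ 1 ∧ r = ‖e w‖}) :
    εL = sInf {r : ℝ | ∃ φ : Fin k → X,
          r = sSup {s : ℝ | ∃ u : X, ‖u‖ ≤ 1 ∧
                s = ‖e (u - ∑ j, l j u • φ j)‖}} :=
  statement2_general e l hl εL hεL
end

section
/- For almost every ω, the series Σ_{n=0}^{∞} exp( Σ_{i=0}^{n} Q(θ^{−i} ω) ) is finite. -/
open Filter MeasureTheory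

/-!
Put `T = θ⁻¹` and `ε = -E[Q] / 2 > 0`, and let `S_n` be the Birkhoff sums of `g = Q + ε` along
`T`, so that `∑_{i ≤ n} Q(T^i ω) = S_{n+1}(ω) - (n + 1) ε`. It suffices to show that
`sup_n S_n(ω) < ∞` almost surely, since then the series is dominated by a geometric one.
The set where the sums `S_n` are unbounded above is `T`-invariant, hence null or conull by
ergodicity. If it were conull, the sets `{max_{k ≤ N} S_k > 0}` would increase to a conull set,
and Garsia's maximal ergodic inequality `∫_{max_{k ≤ N} S_k > 0} g ≥ 0` would give `E[g] ≥ 0`,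
whereas `E[g] = E[Q] / 2 < 0`.
-/

open Set

theorem PreErgodic.of_leftInverse {α : Type*} [MeasurableSpace α] {μ : Measure α}
    {θ T : α → α} (hθ : PreErgodic θ μ) (h : Function.LeftInverse T θ) : PreErgodic T μ where
  aeconst_set s hs hTs := hθ.aeconst_set hs <| by
    ext x
    simpa [h x] using (Set.ext_iff.mp hTs (θ x)).symm

section Maximal

variable {α : Type*} {T : α → α} {f : α → ℝ}

theorem partialSups_birkhoffSum_nonneg (n : ℕ) (x : α) :
    0 ≤ partialSups (birkhoffSum T f) n x := by
  simpa [Pi.partialSups_apply] using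
    le_partialSups_of_le (fun k => birkhoffSum T f k x) (Nat.zero_le n)

theorem partialSups_birkhoffSum_le_max (n : ℕ) (x : α) :
    partialSups (birkhoffSum T f) n x ≤ max 0 (f x + partialSups (birkhoffSum T f) n (T x)) := by
  rw [Pi.partialSups_apply]
  refine partialSups_le _ _ _ fun k hk => ?_
  rcases k with _ | k
  · simp
  · rw [birkhoffSum_succ']
    refine le_max_of_le_right ?_
    gcongr
    rw [Pi.partialSups_apply]
    exact le_partialSups_of_le (fun k => birkhoffSum T f k (T x)) (by omega)

theorem partialSups_birkhoffSum_sub_comp_le_indicator (n : ℕ) (x : α) :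
    partialSups (birkhoffSum T f) n x - partialSups (birkhoffSum T f) n (T x) ≤
      {y | 0 < partialSups (birkhoffSum T f) n y}.indicator f x := by
  have hTx := partialSups_birkhoffSum_nonneg (T := T) (f := f) n (T x)
  by_cases hx : 0 < partialSups (birkhoffSum T f) n x
  · rw [indicator_of_mem (show x ∈ {y | 0 < partialSups (birkhoffSum T f) n y} from hx)]
    have := partialSups_birkhoffSum_le_max (T := T) (f := f) n x
    rcases le_max_iff.mp this with h | h <;> linarith
  · rw [indicator_of_notMem (show x ∉ {y | 0 < partialSups (birkhoffSum T f) n y} from hx)]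
    linarith [not_lt.mp hx]

theorem bddAbove_range_birkhoffSum_apply_iff (x : α) :
    BddAbove (range fun n => birkhoffSum T f n (T x)) ↔
      BddAbove (range fun n => birkhoffSum T f n x) := by
  constructor
  · rintro ⟨C, hC⟩
    refine ⟨max 0 (f x + C), forall_mem_range.2 fun n => ?_⟩
    rcases n with _ | n
    · simp
    · rw [birkhoffSum_succ']
      exact le_max_of_le_right (by gcongr; exact hC (mem_range_self n))
  · rintro ⟨C, hC⟩
    refine ⟨C - f x, forall_mem_range.2 fun n => ?_⟩
    have := hC (mem_range_self (n + 1))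
    rw [birkhoffSum_succ'] at this
    linarith

variable [MeasurableSpace α] {μ : Measure α}

theorem measurable_birkhoffSum (hT : Measurable T) (hf : Measurable f) (n : ℕ) :
    Measurable (birkhoffSum T f n) :=
  Finset.measurable_sum _ fun i _ => hf.comp (hT.iterate i)

theorem measurable_partialSups_birkhoffSum (hT : Measurable T) (hf : Measurable f) (n : ℕ) :
    Measurable (partialSups (birkhoffSum T f) n) := by
  induction n with
  | zero => exact measurable_birkhoffSum hT hf 0
  | succ n ih =>
    rw [partialSups_add_one]
    exact ih.sup (measurable_birkhoffSum hT hf _)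

namespace MeasureTheory.MeasurePreserving

theorem integrable_birkhoffSum (hT : MeasurePreserving T μ μ) (hf : Integrable f μ) (n : ℕ) :
    Integrable (birkhoffSum T f n) μ :=
  integrable_finsetSum _ fun i _ => (hT.iterate i).integrable_comp_of_integrable hf

theorem integrable_partialSups_birkhoffSum (hT : MeasurePreserving T μ μ) (hf : Integrable f μ)
    (n : ℕ) : Integrable (partialSups (birkhoffSum T f) n) μ := by
  induction n with
  | zero => exact hT.integrable_birkhoffSum hf 0
  | succ n ih =>
    rw [partialSups_add_one]
    exact ih.sup (hT.integrable_birkhoffSum hf _)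

theorem setIntegral_partialSups_birkhoffSum_pos_nonneg (hT : MeasurePreserving T μ μ)
    (hfm : Measurable f) (hf : Integrable f μ) (n : ℕ) :
    0 ≤ ∫ x in {x | 0 < partialSups (birkhoffSum T f) n x}, f x ∂μ := by
  set M := partialSups (birkhoffSum T f) n
  have hMm : Measurable M := measurable_partialSups_birkhoffSum hT.measurable hfm n
  have hM : Integrable M μ := hT.integrable_partialSups_birkhoffSum hf n
  have hMT : Integrable (fun x => M (T x)) μ := hT.integrable_comp_of_integrable hM
  have hE : MeasurableSet {x | 0 < M x} := measurableSet_lt measurable_const hMm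
  have hcomp : ∫ x, M (T x) ∂μ = ∫ x, M x ∂μ := by
    rw [← integral_map hT.aemeasurable (by rw [hT.map_eq]; exact hM.aestronglyMeasurable),
      hT.map_eq]
  calc (0 : ℝ) = ∫ x, (M x - M (T x)) ∂μ := by rw [integral_sub hM hMT, hcomp, sub_self]
    _ ≤ ∫ x, {x | 0 < M x}.indicator f x ∂μ :=
      integral_mono (hM.sub hMT) (hf.indicator hE)
        (partialSups_birkhoffSum_sub_comp_le_indicator n)
    _ = ∫ x in {x | 0 < M x}, f x ∂μ := integral_indicator hE

theorem integral_nonneg_of_ae_not_bddAbove_birkhoffSum (hT : MeasurePreserving T μ μ)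
    (hfm : Measurable f) (hf : Integrable f μ)
    (h : ∀ᵐ x ∂μ, ¬BddAbove (range fun n => birkhoffSum T f n x)) :
    0 ≤ ∫ x, f x ∂μ := by
  set E : ℕ → Set α := fun n => {x | 0 < partialSups (birkhoffSum T f) n x}
  have hE n : MeasurableSet (E n) :=
    measurableSet_lt measurable_const (measurable_partialSups_birkhoffSum hT.measurable hfm n)
  have hmono : Monotone E := fun m n hmn x hx =>
    hx.trans_le (partialSups_monotone (birkhoffSum T f) hmn x)
  have hcover : ∀ᵐ x ∂μ, x ∈ ⋃ n, E n := h.mono fun x hx => by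
    obtain ⟨_, ⟨n, rfl⟩, hn⟩ := not_bddAbove_iff.mp hx 0
    exact mem_iUnion.2 ⟨n, hn.trans_le (le_partialSups (birkhoffSum T f) n x)⟩
  have hlim := tendsto_setIntegral_of_monotone hE hmono hf.integrableOn
  rw [Measure.restrict_eq_self_of_ae_mem hcover] at hlim
  exact ge_of_tendsto' hlim fun n => hT.setIntegral_partialSups_birkhoffSum_pos_nonneg hfm hf n

end MeasureTheory.MeasurePreserving

theorem Ergodic.ae_bddAbove_birkhoffSum (hT : Ergodic T μ) (hf : Integrable f μ)
    (hneg : ∫ x, f x ∂μ < 0) : ∀ᵐ x ∂μ, BddAbove (range fun n => birkhoffSum T f n x) := by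
  obtain ⟨g, hgm, hfg⟩ := hf.aestronglyMeasurable
  have hS : ∀ᵐ x ∂μ, ∀ n, birkhoffSum T f n x = birkhoffSum T g n x :=
    ae_all_iff.2 fun n => hT.quasiMeasurePreserving.birkhoffSum_ae_eq_of_ae_eq hfg n
  suffices ∀ᵐ x ∂μ, BddAbove (range fun n => birkhoffSum T g n x) by
    filter_upwards [this, hS] with x hx hSx
    simpa only [hSx] using hx
  have hA := measurableSet_bddAbove_range (measurable_birkhoffSum hT.measurable hgm.measurable)
  have hTA : T ⁻¹' {x | BddAbove (range fun n => birkhoffSum T g n x)} =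
      {x | BddAbove (range fun n => birkhoffSum T g n x)} :=
    ext bddAbove_range_birkhoffSum_apply_iff
  refine (hT.ae_mem_or_ae_notMem hA hTA).resolve_right fun hunbdd => ?_
  have := hT.toMeasurePreserving.integral_nonneg_of_ae_not_bddAbove_birkhoffSum hgm.measurable
    (hf.congr hfg) hunbdd
  rw [integral_congr_ae hfg] at hneg
  linarith

end Maximal

theorem summable_exp_of_le_sub_mul {u : ℕ → ℝ} {C ε : ℝ} (hε : 0 < ε)
    (hu : ∀ n, u n ≤ C - ε * n) : Summable fun n => Real.exp (u n) := by
  have hgeom : Summable fun n : ℕ => Real.exp C * Real.exp (-ε) ^ n :=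
    (summable_geometric_of_lt_one (Real.exp_nonneg _)
      (Real.exp_lt_one_iff.2 (neg_neg_of_pos hε))).mul_left _
  refine hgeom.of_nonneg_of_le (fun n => (Real.exp_pos _).le) fun n => ?_
  rw [← Real.exp_nat_mul, ← Real.exp_add]
  exact Real.exp_le_exp.2 (by linarith [hu n])

theorem statement4_general
    {Ω : Type*} [MeasurableSpace Ω] {μ : Measure Ω} [IsProbabilityMeasure μ]
    {θ θinv : Ω → Ω}
    (hinv₁ : Function.LeftInverse θinv θ)
    (hθ : Ergodic θ μ) (hθinv : MeasurePreserving θinv μ μ)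
    {Q : Ω → ℝ} (hQ : Integrable Q μ) (hQneg : ∫ ω, Q ω ∂μ < 0) :
    ∀ᵐ ω ∂μ,
      Summable (fun n : ℕ => Real.exp (∑ i ∈ Finset.range (n + 1), Q (θinv^[i] ω))) := by
  have hT : Ergodic θinv μ := { hθinv, hθ.toPreErgodic.of_leftInverse hinv₁ with }
  obtain ⟨ε, hε, hgneg⟩ : ∃ ε : ℝ, 0 < ε ∧ ∫ ω, (Q + fun _ : Ω => ε) ω ∂μ < 0 := by
    refine ⟨-(∫ ω, Q ω ∂μ) / 2, by linarith, ?_⟩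
    rw [Pi.add_def, integral_add hQ (integrable_const _), integral_const, probReal_univ,
      one_smul]
    linarith
  filter_upwards [hT.ae_bddAbove_birkhoffSum (hQ.add (integrable_const ε)) hgneg]
    with ω ⟨C, hC⟩
  refine summable_exp_of_le_sub_mul hε (C := C) fun n => ?_
  have hS := hC (mem_range_self (n + 1))
  rw [birkhoffSum_add', birkhoffSum_of_comp_eq (φ := fun _ : Ω => ε) rfl] at hS
  change birkhoffSum θinv Q (n + 1) ω ≤ C - ε * n
  simp only [Pi.smul_apply, nsmul_eq_mul, Nat.cast_add, Nat.cast_one] at hS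
  linarith

/-- Let `(Ω, F, P)` be a probability space and `θ` an invertible
measurable transformation (with measurable inverse `θinv`) such that both `θ` and
`θ⁻¹` are measure-preserving and `θ` is ergodic.  If `Q` is integrable with `E[Q] < 0`,
then for almost every `ω` the series `∑_{n=0}^{∞} exp(∑_{i=0}^{n} Q(θ^{−i} ω))`
is finite (i.e. summable). -/
theorem statement4
    {Ω : Type*} [MeasurableSpace Ω] {μ : Measure Ω} [IsProbabilityMeasure μ]
    {θ θinv : Ω → Ω}
    (hinv₁ : Function.LeftInverse θinv θ) (hinv₂ : Function.RightInverse θinv θ)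
    (hθ : Ergodic θ μ) (hθinv : MeasurePreserving θinv μ μ)
    {Q : Ω → ℝ} (hQ : Integrable Q μ) (hQneg : ∫ ω, Q ω ∂μ < 0) :
    ∀ᵐ ω ∂μ,
      Summable (fun n : ℕ => Real.exp (∑ i ∈ Finset.range (n + 1), Q (θinv^[i] ω))) :=
  statement4_general hinv₁ hθ hθinv hQ hQneg
end

section
/- Let α, β : (−∞, 0] → [0,∞) be measurable and locally integrable functions and let c > 0. Assume that limsup_{τ→−∞} (1/|τ|)·∫_τ^0 α(s) ds < c and limsup_{τ→−∞} (1/|τ|)·log⁺ β(τ) ≤ 0. Then the improper integral ∫_{−∞}^0 β(τ)·exp( c·τ + ∫_τ^0 α(s) ds ) dτ is finite. -/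
open Filter MeasureTheory intervalIntegral

/-- `exp (δ x)` is integrable on `Iic T` when `δ > 0`. -/
lemma aux_integrableOn_exp_mul_Iic {δ : ℝ} (hδ : 0 < δ) (T : ℝ) :
    IntegrableOn (fun x => Real.exp (δ * x)) (Set.Iic T) volume := by
  apply integrableOn_Iic_of_intervalIntegral_norm_bounded
      (Real.exp (δ * T) / δ) T (a := fun i : ℝ => i) (l := atBot)
  · intro i
    exact (Real.continuous_exp.comp (continuous_const.mul continuous_id)).integrableOn_Ioc
  · exact tendsto_id
  · filter_upwards [eventually_le_atBot T] with i hi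
    have : (∫ x in i..T, ‖Real.exp (δ * x)‖) = ∫ x in i..T, Real.exp (δ * x) := by
      congr 1; ext x; exact Real.norm_of_nonneg (Real.exp_pos _).le
    rw [this]
    have hcomp : (∫ x in i..T, Real.exp (δ * x))
        = δ⁻¹ • (Real.exp (δ * T) - Real.exp (δ * i)) := by
      rw [eq_inv_smul_iff₀ hδ.ne',
        intervalIntegral.smul_integral_comp_mul_left (fun x => Real.exp x) δ, integral_exp]
    rw [hcomp, smul_eq_mul, div_eq_inv_mul]
    apply mul_le_mul_of_nonneg_left _ (inv_nonneg.mpr hδ.le)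
    have := (Real.exp_pos (δ * i)).le
    linarith

/-- Let `α, β : (−∞,0] → [0,∞)` be measurable, locally integrable
functions and `c > 0`.  Assume `limsup_{τ→−∞} (1/|τ|) ∫_τ^0 α(s) ds < c` (i.e. there is
`c' < c` bounding `(1/|τ|) ∫_τ^0 α` eventually as `τ → −∞`) and
`limsup_{τ→−∞} (1/|τ|) log⁺ β(τ) ≤ 0` (i.e. for every `ε > 0`, eventually
`(1/|τ|) log⁺ β(τ) ≤ ε` as `τ → −∞`).  Then the improper integral
`∫_{−∞}^0 β(τ) · exp(c·τ + ∫_τ^0 α(s) ds) dτ` is finite. -/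
theorem statement11
    {α β : ℝ → ℝ} {c : ℝ} (hc : 0 < c)
    (hα_meas : Measurable α) (hβ_meas : Measurable β)
    (hα_nonneg : ∀ τ ≤ (0 : ℝ), 0 ≤ α τ) (hβ_nonneg : ∀ τ ≤ (0 : ℝ), 0 ≤ β τ)
    (hα_int : ∀ τ ≤ (0 : ℝ), IntervalIntegrable α volume τ 0)
    (hβ_int : ∀ τ ≤ (0 : ℝ), IntervalIntegrable β volume τ 0)
    (hα_limsup : ∃ c' : ℝ, c' < c ∧
      ∀ᶠ τ : ℝ in atBot, (∫ s in τ..0, α s) / |τ| ≤ c')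
    (hβ_limsup : ∀ ε : ℝ, 0 < ε →
      ∀ᶠ τ : ℝ in atBot, max (Real.log (β τ)) 0 / |τ| ≤ ε) :
    IntegrableOn (fun τ => β τ * Real.exp (c * τ + ∫ s in τ..0, α s))
      (Set.Iic (0 : ℝ)) volume := by
  obtain ⟨c', hc'lt, hev⟩ := hα_limsup
  set ε : ℝ := (c - c') / 2 with hεdef
  have hε : 0 < ε := by simp only [hεdef]; linarith
  have hevβ := hβ_limsup ε hε
  rw [eventually_atBot] at hev hevβ
  obtain ⟨a₁, ha₁⟩ := hev
  obtain ⟨a₂, ha₂⟩ := hevβ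
  set T : ℝ := min (min a₁ a₂) (-1) with hTdef
  have hT0 : T ≤ 0 := le_trans (min_le_right _ _) (by norm_num)
  -- continuity of the primitive on `Iic 0`
  set F : ℝ → ℝ := fun τ => ∫ s in τ..0, α s with hFdef
  have hFcont : ContinuousOn F (Set.Iic (0 : ℝ)) := by
    intro τ₀ hτ₀
    have hint : IntegrableOn α (Set.uIcc (τ₀ - 1) 0) volume := by
      have h := hα_int (τ₀ - 1) (by simp at hτ₀ ⊢; linarith)
      rw [intervalIntegrable_iff, Set.uIoc_of_le (by simp at hτ₀; linarith)] at h
      rw [Set.uIcc_of_le (by simp at hτ₀; linarith),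
        integrableOn_Icc_iff_integrableOn_Ioc]
      exact h
    have hcont := intervalIntegral.continuousOn_primitive_interval_left hint
    have hmem : Set.uIcc (τ₀ - 1) 0 ∈ nhdsWithin τ₀ (Set.Iic (0 : ℝ)) := by
      rw [Set.uIcc_of_le (by simp at hτ₀; linarith)]
      refine Filter.mem_of_superset
        (inter_mem_nhdsWithin _ (Ioi_mem_nhds (by linarith : τ₀ - 1 < τ₀))) ?_
      rintro x ⟨hx1, hx2⟩
      exact ⟨le_of_lt hx2, hx1⟩
    have hτ₀mem : τ₀ ∈ Set.uIcc (τ₀ - 1) 0 := by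
      rw [Set.uIcc_of_le (by simp at hτ₀; linarith)]
      exact ⟨by linarith, hτ₀⟩
    exact (hcont τ₀ hτ₀mem).mono_of_mem_nhdsWithin hmem
  -- a.e. strong measurability of the integrand on `Iic 0`
  have hFm : AEMeasurable F (volume.restrict (Set.Iic (0 : ℝ))) :=
    hFcont.aemeasurable measurableSet_Iic
  have hasm : AEStronglyMeasurable (fun τ => β τ * Real.exp (c * τ + F τ))
      (volume.restrict (Set.Iic (0 : ℝ))) := by
    refine (hβ_meas.aemeasurable.mul ?_).aestronglyMeasurable
    exact (Real.measurable_exp.comp_aemeasurable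
      ((aemeasurable_id.const_mul c).add hFm))
  -- nonnegativity and a key monotonicity fact
  have hkey : ∀ τ, T ≤ τ → τ ≤ 0 → F τ ≤ F T := by
    intro τ hTτ hτ0
    have h1 : IntervalIntegrable α volume T τ :=
      (hα_int T hT0).mono_set (by
        rw [Set.uIcc_of_le hTτ, Set.uIcc_of_le hT0]
        exact Set.Icc_subset_Icc le_rfl hτ0)
    have h2 : IntervalIntegrable α volume τ 0 := hα_int τ hτ0
    have hsplit := intervalIntegral.integral_add_adjacent_intervals h1 h2
    have hpos : 0 ≤ ∫ s in T..τ, α s := by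
      apply intervalIntegral.integral_nonneg hTτ
      intro u hu
      exact hα_nonneg u (le_trans hu.2 hτ0)
    simp only [hFdef]
    linarith [hsplit]
  -- split the domain
  have hsplit : Set.Iic (0 : ℝ) = Set.Iic T ∪ Set.Icc T 0 := (Set.Iic_union_Icc_eq_Iic hT0).symm
  rw [hsplit]
  apply MeasureTheory.IntegrableOn.union
  · -- tail part : bound by `exp (ε τ)`
    refine Integrable.mono' (aux_integrableOn_exp_mul_Iic hε T) ?_ ?_
    · exact hasm.mono_measure (Measure.restrict_mono (Set.Iic_subset_Iic.mpr hT0) le_rfl)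
    · filter_upwards [ae_restrict_mem measurableSet_Iic] with τ (hτ : τ ≤ T)
      have hτ0 : τ ≤ 0 := le_trans hτ hT0
      have hτ1 : τ ≤ -1 := le_trans hτ (min_le_right _ _)
      have hτneg : τ < 0 := by linarith
      have habs : |τ| = -τ := abs_of_neg hτneg
      have hτa₁ : τ ≤ a₁ := le_trans hτ (le_trans (min_le_left _ _) (min_le_left _ _))
      have hτa₂ : τ ≤ a₂ := le_trans hτ (le_trans (min_le_left _ _) (min_le_right _ _))
      have hαb : F τ ≤ c' * (-τ) := by
        have := ha₁ τ hτa₁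
        rw [div_le_iff₀ (by rw [habs]; linarith)] at this
        rw [habs] at this; exact this
      have hβb : β τ ≤ Real.exp (ε * (-τ)) := by
        have h := ha₂ τ hτa₂
        rw [div_le_iff₀ (by rw [habs]; linarith)] at h
        rw [habs] at h
        have hlog : Real.log (β τ) ≤ ε * (-τ) := le_trans (le_max_left _ _) h
        rcases eq_or_lt_of_le (hβ_nonneg τ hτ0) with h0 | h0
        · rw [← h0]; exact (Real.exp_pos _).le
        · calc β τ = Real.exp (Real.log (β τ)) := (Real.exp_log h0).symm
            _ ≤ Real.exp (ε * (-τ)) := Real.exp_le_exp.mpr hlog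
      have hnn : 0 ≤ β τ * Real.exp (c * τ + F τ) :=
        mul_nonneg (hβ_nonneg τ hτ0) (Real.exp_pos _).le
      rw [Real.norm_of_nonneg hnn]
      calc β τ * Real.exp (c * τ + F τ)
          ≤ Real.exp (ε * (-τ)) * Real.exp (c * τ + c' * (-τ)) := by
            apply mul_le_mul hβb (Real.exp_le_exp.mpr (by linarith)) (Real.exp_pos _).le
              (Real.exp_pos _).le
        _ = Real.exp (ε * (-τ) + (c * τ + c' * (-τ))) := (Real.exp_add _ _).symm
        _ = Real.exp (ε * τ) := by congr 1; simp only [hεdef]; ring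
  · -- compact part : bound by `exp (F T) * β`
    have hβInt : IntegrableOn β (Set.Icc T 0) volume := by
      have h := hβ_int T hT0
      rw [intervalIntegrable_iff, Set.uIoc_of_le hT0] at h
      rw [integrableOn_Icc_iff_integrableOn_Ioc]
      exact h
    refine Integrable.mono' (g := fun τ => Real.exp (F T) * β τ)
      (hβInt.const_mul _) ?_ ?_
    · exact hasm.mono_measure (Measure.restrict_mono
        (fun x hx => Set.mem_Iic.mpr hx.2) le_rfl)
    · filter_upwards [ae_restrict_mem measurableSet_Icc] with τ hτ
      obtain ⟨hTτ, hτ0⟩ := hτ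
      have hnn : 0 ≤ β τ * Real.exp (c * τ + F τ) :=
        mul_nonneg (hβ_nonneg τ hτ0) (Real.exp_pos _).le
      rw [Real.norm_of_nonneg hnn, mul_comm (Real.exp (F T)) (β τ)]
      apply mul_le_mul_of_nonneg_left _ (hβ_nonneg τ hτ0)
      apply Real.exp_le_exp.mpr
      have h1 : c * τ ≤ 0 := mul_nonpos_of_nonneg_of_nonpos hc.le hτ0
      have h2 := hkey τ hTτ hτ0
      linarith
end

section
/- Let S = Σ_{i} λ_i·ξ_i², which converges almost surely. For every α ≥ 0 with 2·α·T < 1 one has E[exp(α·S)] ≤ exp( α·T / (1 − 2·α·T) ). -/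
open Filter MeasureTheory ProbabilityTheory Real
open scoped ENNReal NNReal Topology

lemma gauss_sq_mgf {c : ℝ} (hc : c < 1/2) :
    ∫⁻ x, ENNReal.ofReal (Real.exp (c * x ^ 2)) ∂(gaussianReal 0 1)
      = ENNReal.ofReal (Real.sqrt (1 - 2 * c)⁻¹) := by
  have hb : (0:ℝ) < 1/2 - c := by linarith
  rw [gaussianReal_of_var_ne_zero 0 one_ne_zero,
    lintegral_withDensity_eq_lintegral_mul _ (measurable_gaussianPDF 0 1)
      (by fun_prop : Measurable fun x : ℝ => ENNReal.ofReal (Real.exp (c * x ^ 2)))]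
  have heq : ∀ x : ℝ, (gaussianPDF 0 1 * fun x => ENNReal.ofReal (Real.exp (c * x ^ 2))) x
      = ENNReal.ofReal ((Real.sqrt (2 * π))⁻¹ * Real.exp (-(1/2 - c) * x ^ 2)) := by
    intro x
    simp only [Pi.mul_apply, gaussianPDF, gaussianPDFReal]
    rw [← ENNReal.ofReal_mul (by positivity)]
    congr 1
    push_cast
    rw [mul_one, mul_assoc, ← Real.exp_add]
    ring_nf
  simp only [heq]
  rw [← ofReal_integral_eq_lintegral_ofReal]
  · congr 1
    rw [integral_const_mul, integral_gaussian]
    rw [← Real.sqrt_inv, ← Real.sqrt_mul (by positivity)]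
    congr 1
    have h1 : (1:ℝ) - 2*c ≠ 0 := by linarith
    have h2 : (1:ℝ)/2 - c ≠ 0 := by linarith
    have hπ := Real.pi_ne_zero
    field_simp
  · exact (integrable_exp_neg_mul_sq hb).const_mul _
  · filter_upwards with x; positivity

lemma sqrt_inv_le_exp {c β : ℝ} (hc : 0 ≤ c) (hcβ : c ≤ β) (hβ : 2 * β < 1) :
    Real.sqrt (1 - 2 * c)⁻¹ ≤ Real.exp (c / (1 - 2 * β)) := by
  have h1 : (0:ℝ) < 1 - 2 * β := by linarith
  have h2 : (0:ℝ) < 1 - 2 * c := by linarith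
  have key : (1 - 2 * c)⁻¹ ≤ Real.exp (2 * (c / (1 - 2 * β))) := by
    have e1 : (1 - 2 * c)⁻¹ = 1 + 2 * c / (1 - 2 * c) := by field_simp; ring
    have e2 : 1 + 2 * c / (1 - 2 * c) ≤ Real.exp (2 * c / (1 - 2 * c)) := by
      linarith [Real.add_one_le_exp (2 * c / (1 - 2 * c))]
    have e3 : 2 * c / (1 - 2 * c) ≤ 2 * (c / (1 - 2 * β)) := by
      rw [mul_div_assoc]
      gcongr
    calc (1 - 2 * c)⁻¹ = 1 + 2 * c / (1 - 2 * c) := e1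
      _ ≤ Real.exp (2 * c / (1 - 2 * c)) := e2
      _ ≤ Real.exp (2 * (c / (1 - 2 * β))) := Real.exp_le_exp.2 e3
  calc Real.sqrt (1 - 2 * c)⁻¹ ≤ Real.sqrt (Real.exp (2 * (c / (1 - 2 * β)))) :=
        Real.sqrt_le_sqrt key
    _ = Real.exp (c / (1 - 2 * β)) := by
        rw [show Real.exp (2 * (c / (1 - 2 * β))) = Real.exp (c / (1 - 2 * β)) ^ 2 by
          rw [← Real.exp_nat_mul]; norm_num]
        exact Real.sqrt_sq (Real.exp_nonneg _)

lemma lintegral_prod_indep {Ω : Type*} [MeasurableSpace Ω] {μ : Measure Ω}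
    [IsProbabilityMeasure μ]
    (f : ℕ → Ω → ENNReal) (hf_meas : ∀ i, Measurable (f i))
    (hf_indep : iIndepFun f μ) (n : ℕ) :
    ∫⁻ ω, ∏ i ∈ Finset.range n, f i ω ∂μ = ∏ i ∈ Finset.range n, ∫⁻ ω, f i ω ∂μ := by
  induction n with
  | zero => simp
  | succ n ih =>
    rw [Finset.prod_range_succ]
    have hindep : IndepFun (fun ω => ∏ i ∈ Finset.range n, f i ω) (f n) μ := by
      have := hf_indep.indepFun_finsetProd_of_notMem hf_meas
        (Finset.notMem_range_self (n := n))
      have heq : (∏ j ∈ Finset.range n, f j) = fun ω => ∏ i ∈ Finset.range n, f i ω := by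
        ext ω; simp
      rwa [heq] at this
    have := lintegral_mul_eq_lintegral_mul_lintegral_of_indepFun
      (Finset.measurable_prod _ fun i _ => hf_meas i) (hf_meas n) hindep
    simp only [Pi.mul_apply] at this
    have hrw : ∀ ω, ∏ i ∈ Finset.range (n+1), f i ω = (∏ i ∈ Finset.range n, f i ω) * f n ω :=
      fun ω => Finset.prod_range_succ _ _
    calc ∫⁻ ω, ∏ i ∈ Finset.range (n+1), f i ω ∂μ
        = ∫⁻ ω, (∏ i ∈ Finset.range n, f i ω) * f n ω ∂μ := by
          exact lintegral_congr fun ω => hrw ω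
      _ = (∫⁻ ω, ∏ i ∈ Finset.range n, f i ω ∂μ) * ∫⁻ ω, f n ω ∂μ := this
      _ = (∏ i ∈ Finset.range n, ∫⁻ ω, f i ω ∂μ) * ∫⁻ ω, f n ω ∂μ := by rw [ih]


/-- Let `(ξ i)` be independent standard Gaussian real random variables
and `(λ i)` nonnegative reals with `T = ∑ i, λ i < ∞`.  Then `S = ∑ i, λ i · ξ i ²`
converges almost surely, and for every `α ≥ 0` with `2·α·T < 1` one has
`E[exp(α·S)] ≤ exp(α·T / (1 − 2·α·T))`. -/
theorem statement12
    {Ω : Type*} [MeasurableSpace Ω] {μ : Measure Ω} [IsProbabilityMeasure μ]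
    (ξ : ℕ → Ω → ℝ) (hξ_meas : ∀ i, Measurable (ξ i))
    (hξ_indep : iIndepFun ξ μ)
    (hξ_gauss : ∀ i, Measure.map (ξ i) μ = gaussianReal 0 1)
    (lam : ℕ → ℝ) (hlam_nonneg : ∀ i, 0 ≤ lam i) (hlam_summable : Summable lam)
    (T : ℝ) (hT : T = ∑' i, lam i) :
    (∀ᵐ ω ∂μ, Summable (fun i => lam i * (ξ i ω) ^ 2)) ∧
    ∀ α : ℝ, 0 ≤ α → 2 * α * T < 1 →
      (∫⁻ ω, ENNReal.ofReal (Real.exp (α * ∑' i, lam i * (ξ i ω) ^ 2)) ∂μ)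
        ≤ ENNReal.ofReal (Real.exp (α * T / (1 - 2 * α * T))) := by
  -- second moment of the standard gaussian is finite
  have hK : ∫⁻ x, ENNReal.ofReal (x ^ 2) ∂(gaussianReal 0 1) < ⊤ := by
    have hle : ∀ x : ℝ, ENNReal.ofReal (x ^ 2)
        ≤ ENNReal.ofReal 4 * ENNReal.ofReal (Real.exp ((1/4 : ℝ) * x ^ 2)) := by
      intro x
      rw [← ENNReal.ofReal_mul (by norm_num)]
      apply ENNReal.ofReal_le_ofReal
      have := Real.add_one_le_exp ((1/4 : ℝ) * x ^ 2)
      nlinarith [Real.exp_pos ((1/4 : ℝ) * x ^ 2)]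
    calc ∫⁻ x, ENNReal.ofReal (x ^ 2) ∂(gaussianReal 0 1)
        ≤ ∫⁻ x, ENNReal.ofReal 4 * ENNReal.ofReal (Real.exp ((1/4 : ℝ) * x ^ 2))
            ∂(gaussianReal 0 1) := lintegral_mono hle
      _ = ENNReal.ofReal 4 * ∫⁻ x, ENNReal.ofReal (Real.exp ((1/4 : ℝ) * x ^ 2))
            ∂(gaussianReal 0 1) := lintegral_const_mul _ (by fun_prop)
      _ = ENNReal.ofReal 4 * ENNReal.ofReal (Real.sqrt (1 - 2 * (1/4 : ℝ))⁻¹) := by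
          rw [gauss_sq_mgf (by norm_num)]
      _ < ⊤ := by finiteness
  -- change of variables for each coordinate
  have hmap : ∀ (φ : ℝ → ℝ≥0∞), Measurable φ → ∀ i,
      ∫⁻ ω, φ (ξ i ω) ∂μ = ∫⁻ x, φ x ∂(gaussianReal 0 1) := by
    intro φ hφ i
    rw [← hξ_gauss i, lintegral_map hφ (hξ_meas i)]
  -- Part 1 : almost sure summability
  have h_sum : ∀ᵐ ω ∂μ, Summable (fun i => lam i * (ξ i ω) ^ 2) := by
    have hFmeas : ∀ i, Measurable (fun ω => ENNReal.ofReal (lam i * (ξ i ω) ^ 2)) := by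
      intro i; exact (by fun_prop : Measurable fun x : ℝ =>
        ENNReal.ofReal (lam i * x ^ 2)).comp (hξ_meas i)
    have hFi : ∀ i, ∫⁻ ω, ENNReal.ofReal (lam i * (ξ i ω) ^ 2) ∂μ
        = ENNReal.ofReal (lam i) * ∫⁻ x, ENNReal.ofReal (x ^ 2) ∂(gaussianReal 0 1) := by
      intro i
      have : ∀ ω, ENNReal.ofReal (lam i * (ξ i ω) ^ 2)
          = ENNReal.ofReal (lam i) * ENNReal.ofReal ((ξ i ω) ^ 2) := fun ω =>
        ENNReal.ofReal_mul (hlam_nonneg i)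
      simp only [this]
      rw [lintegral_const_mul _ (show Measurable fun ω => ENNReal.ofReal ((ξ i ω) ^ 2) from
        (by fun_prop : Measurable fun x : ℝ => ENNReal.ofReal (x ^ 2)).comp (hξ_meas i))]
      congr 1
      exact hmap (fun x => ENNReal.ofReal (x ^ 2)) (by fun_prop) i
    have hfin : ∫⁻ ω, ∑' i, ENNReal.ofReal (lam i * (ξ i ω) ^ 2) ∂μ < ⊤ := by
      rw [lintegral_tsum fun i => (hFmeas i).aemeasurable]
      simp only [hFi]
      rw [ENNReal.tsum_mul_right]
      have : ∑' i, ENNReal.ofReal (lam i) = ENNReal.ofReal T := by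
        rw [hT, ENNReal.ofReal_tsum_of_nonneg hlam_nonneg hlam_summable]
      rw [this]
      exact ENNReal.mul_lt_top ENNReal.ofReal_lt_top hK
    have hae : ∀ᵐ ω ∂μ, ∑' i, ENNReal.ofReal (lam i * (ξ i ω) ^ 2) < ⊤ :=
      ae_lt_top (by exact Measurable.ennreal_tsum hFmeas) hfin.ne
    filter_upwards [hae] with ω hω
    have := ENNReal.summable_toReal hω.ne
    refine this.congr fun i => ?_
    rw [ENNReal.toReal_ofReal (mul_nonneg (hlam_nonneg i) (sq_nonneg _))]
  refine ⟨h_sum, fun α hα hαT => ?_⟩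
  have hTnn : 0 ≤ T := hT ▸ tsum_nonneg hlam_nonneg
  have hT1 : (0:ℝ) < 1 - 2 * α * T := by linarith
  have hlamT : ∀ i, lam i ≤ T := fun i =>
    hT ▸ Summable.le_tsum hlam_summable i fun j _ => hlam_nonneg j
  have hci : ∀ i, α * lam i ≤ α * T := fun i =>
    mul_le_mul_of_nonneg_left (hlamT i) hα
  have hβ : 2 * (α * T) < 1 := by linarith
  set f : ℕ → Ω → ℝ≥0∞ := fun i ω => ENNReal.ofReal (Real.exp (α * lam i * (ξ i ω) ^ 2))
    with hf_def
  have hf_meas : ∀ i, Measurable (f i) := fun i =>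
    (by fun_prop : Measurable fun x : ℝ =>
      ENNReal.ofReal (Real.exp (α * lam i * x ^ 2))).comp (hξ_meas i)
  have hf_indep : iIndepFun f μ :=
    hξ_indep.comp (fun i x => ENNReal.ofReal (Real.exp (α * lam i * x ^ 2)))
      (fun i => by fun_prop)
  -- value of each factor
  have hf_int : ∀ i, ∫⁻ ω, f i ω ∂μ ≤ ENNReal.ofReal
      (Real.exp (α * lam i / (1 - 2 * α * T))) := by
    intro i
    have h1 : ∫⁻ ω, f i ω ∂μ = ENNReal.ofReal (Real.sqrt (1 - 2 * (α * lam i))⁻¹) := by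
      have hm := hmap (fun x => ENNReal.ofReal (Real.exp (α * lam i * x ^ 2))) (by fun_prop) i
      calc ∫⁻ ω, f i ω ∂μ
          = ∫⁻ x, ENNReal.ofReal (Real.exp (α * lam i * x ^ 2)) ∂(gaussianReal 0 1) := hm
        _ = ENNReal.ofReal (Real.sqrt (1 - 2 * (α * lam i))⁻¹) :=
            gauss_sq_mgf (by nlinarith [hci i])
    rw [h1]
    apply ENNReal.ofReal_le_ofReal
    have := sqrt_inv_le_exp (c := α * lam i) (β := α * T)
      (mul_nonneg hα (hlam_nonneg i)) (hci i) hβ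
    calc Real.sqrt (1 - 2 * (α * lam i))⁻¹ ≤ Real.exp (α * lam i / (1 - 2 * (α * T))) := this
      _ = Real.exp (α * lam i / (1 - 2 * α * T)) := by ring_nf
  -- partial products
  set g : ℕ → Ω → ℝ≥0∞ := fun n ω => ∏ i ∈ Finset.range n, f i ω with hg_def
  have hg_meas : ∀ n, Measurable (g n) := fun n =>
    Finset.measurable_prod _ fun i _ => hf_meas i
  have hg_bound : ∀ n, ∫⁻ ω, g n ω ∂μ
      ≤ ENNReal.ofReal (Real.exp (α * T / (1 - 2 * α * T))) := by
    intro n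
    rw [hg_def]
    rw [lintegral_prod_indep f hf_meas hf_indep n]
    calc ∏ i ∈ Finset.range n, ∫⁻ ω, f i ω ∂μ
        ≤ ∏ i ∈ Finset.range n, ENNReal.ofReal
            (Real.exp (α * lam i / (1 - 2 * α * T))) :=
          Finset.prod_le_prod' fun i _ => hf_int i
      _ = ENNReal.ofReal (∏ i ∈ Finset.range n,
            Real.exp (α * lam i / (1 - 2 * α * T))) := by
          rw [ENNReal.ofReal_prod_of_nonneg fun i _ => (Real.exp_pos _).le]
      _ = ENNReal.ofReal (Real.exp (∑ i ∈ Finset.range n,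
            α * lam i / (1 - 2 * α * T))) := by rw [Real.exp_sum]
      _ ≤ ENNReal.ofReal (Real.exp (α * T / (1 - 2 * α * T))) := by
          apply ENNReal.ofReal_le_ofReal
          apply Real.exp_le_exp.2
          have hsum : ∑ i ∈ Finset.range n, lam i ≤ T :=
            hT ▸ Summable.sum_le_tsum _ (fun j _ => hlam_nonneg j) hlam_summable
          have : ∑ i ∈ Finset.range n, α * lam i / (1 - 2 * α * T)
              = (α / (1 - 2 * α * T)) * ∑ i ∈ Finset.range n, lam i := by
            rw [Finset.mul_sum]; congr 1; ext i; ring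
          rw [this]
          have h0 : 0 ≤ α / (1 - 2 * α * T) := div_nonneg hα hT1.le
          calc α / (1 - 2 * α * T) * ∑ i ∈ Finset.range n, lam i
              ≤ α / (1 - 2 * α * T) * T := mul_le_mul_of_nonneg_left hsum h0
            _ = α * T / (1 - 2 * α * T) := by ring
  -- pointwise identification of g with exponential of partial sums
  have hg_eq : ∀ n ω, g n ω
      = ENNReal.ofReal (Real.exp (α * ∑ i ∈ Finset.range n, lam i * (ξ i ω) ^ 2)) := by
    intro n ω
    show (∏ i ∈ Finset.range n, ENNReal.ofReal (Real.exp (α * lam i * (ξ i ω) ^ 2)))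
      = ENNReal.ofReal (Real.exp (α * ∑ i ∈ Finset.range n, lam i * (ξ i ω) ^ 2))
    rw [← ENNReal.ofReal_prod_of_nonneg fun i _ => (Real.exp_pos _).le, ← Real.exp_sum,
      Finset.mul_sum]
    congr 2
    exact Finset.sum_congr rfl fun i _ => by ring
  -- monotonicity
  have hg_mono : Monotone g := by
    intro n m hnm
    intro ω
    rw [hg_eq, hg_eq]
    apply ENNReal.ofReal_le_ofReal
    apply Real.exp_le_exp.2
    apply mul_le_mul_of_nonneg_left _ hα
    apply Finset.sum_le_sum_of_subset_of_nonneg (Finset.range_subset_range.2 hnm)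
    intro i _ _
    exact mul_nonneg (hlam_nonneg i) (sq_nonneg _)
  -- a.e. identification of the supremum
  have h_ae_eq : ∀ᵐ ω ∂μ, ENNReal.ofReal (Real.exp (α * ∑' i, lam i * (ξ i ω) ^ 2))
      = ⨆ n, g n ω := by
    filter_upwards [h_sum] with ω hω
    have htend : Tendsto (fun n => ∑ i ∈ Finset.range n, lam i * (ξ i ω) ^ 2)
        atTop (𝓝 (∑' i, lam i * (ξ i ω) ^ 2)) := hω.hasSum.tendsto_sum_nat
    have htend2 : Tendsto (fun n => g n ω) atTop
        (𝓝 (ENNReal.ofReal (Real.exp (α * ∑' i, lam i * (ξ i ω) ^ 2)))) := by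
      simp only [hg_eq]
      exact (ENNReal.continuous_ofReal.tendsto _).comp
        ((Real.continuous_exp.tendsto _).comp (htend.const_mul α))
    have hmono : Monotone fun n => g n ω := fun n m h => hg_mono h ω
    exact tendsto_nhds_unique htend2 (tendsto_atTop_iSup hmono)
  calc ∫⁻ ω, ENNReal.ofReal (Real.exp (α * ∑' i, lam i * (ξ i ω) ^ 2)) ∂μ
      = ∫⁻ ω, ⨆ n, g n ω ∂μ := lintegral_congr_ae h_ae_eq
    _ = ⨆ n, ∫⁻ ω, g n ω ∂μ := lintegral_iSup hg_meas hg_mono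
    _ ≤ ENNReal.ofReal (Real.exp (α * T / (1 - 2 * α * T))) := iSup_le hg_bound
end
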